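/- Let K be an n×(n+1) real matrix of full row rank n, let ξ > 0, λ > 0, and s ∈ (0,1]. Then [tr((K^T K ξ + λI)^{-1})]^s ≤ ξ^{-s}[tr((K^T K)^+)]^s + λ^{-s}, where (K^T K)^+ is the Moore–Penrose pseudoinverse of K^T K. -/

import Mathlib

/-!
Write `M = Kᵀ K`, `A = ξ • M + λ • 1` and `Q = M⁺ M`, the orthogonal projection onto the range
of `M`. Since `M⁺` is symmetric and commutes with `M`, `A (1 - Q) = λ (1 - Q)` and
`A M⁺ = ξ Q + λ M⁺`; multiplying by `A⁻¹` and taking traces of `A⁻¹ = A⁻¹ Q + A⁻¹ (1 - Q)` gives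
`tr A⁻¹ = ξ⁻¹ (tr M⁺ - λ tr (A⁻¹ M⁺)) + λ⁻¹ tr (1 - Q) ≤ ξ⁻¹ tr M⁺ + λ⁻¹ tr (1 - Q)`, where
`tr (A⁻¹ M⁺) ≥ 0` as a trace of a product of positive semidefinite matrices. The trace of the
idempotent `Q` is its rank, which is `rank M = rank K = n`, so `tr (1 - Q) = 1`. Raising to the
power `s` and using the subadditivity of `t ↦ t ^ s` on `[0, ∞)` concludes.
-/

namespace Matrix

variable {m n : Type*}

theorem PosSemidef.isSymm {M : Matrix m m ℝ} (hM : M.PosSemidef) : M.IsSymm :=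
  isHermitian_iff_isSymm.mp hM.isHermitian

theorem PosSemidef.smul_add_smul_one_posDef [DecidableEq m] {M : Matrix m m ℝ}
    (hM : M.PosSemidef) {ξ μ : ℝ} (hξ : 0 ≤ ξ) (hμ : 0 < μ) : (ξ • M + μ • 1).PosDef :=
  PosDef.posSemidef_add (hM.smul hξ) (PosDef.one.smul hμ)

variable [Fintype m] [Fintype n]

open scoped MatrixOrder in
theorem PosSemidef.trace_mul_nonneg [DecidableEq m] {A B : Matrix m m ℝ} (hA : A.PosSemidef)
    (hB : B.PosSemidef) : 0 ≤ (A * B).trace := by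
  set S := CFC.sqrt B
  have hS : Sᴴ = S := (nonneg_iff_posSemidef.mp (CFC.sqrt_nonneg B)).isHermitian
  have hSS : S * S = B := CFC.sqrt_mul_sqrt_self B hB.nonneg
  have h := (hA.mul_mul_conjTranspose_same S).trace_nonneg
  rwa [hS, trace_mul_cycle, hSS, trace_mul_comm] at h

theorem trace_eq_rank_of_isIdempotentElem {K : Type*} [Field K] [DecidableEq m]
    {P : Matrix m m K} (hP : IsIdempotentElem P) : P.trace = P.rank := by
  have hP' : IsIdempotentElem (toLin' P) := hP.map toLinAlgEquiv'
  rw [← trace_toLin'_eq, (LinearMap.IsIdempotentElem.isProj_range _ hP').trace]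
  rfl

structure IsMoorePenroseInverse (A : Matrix m n ℝ) (X : Matrix n m ℝ) : Prop where
  mul_inv_mul : A * X * A = A
  inv_mul_inv : X * A * X = X
  transpose_mul_inv : (A * X)ᵀ = A * X
  transpose_inv_mul : (X * A)ᵀ = X * A

namespace IsMoorePenroseInverse

variable {A : Matrix m n ℝ} {X Y : Matrix n m ℝ}

theorem transpose (hX : IsMoorePenroseInverse A X) : IsMoorePenroseInverse Aᵀ Xᵀ where
  mul_inv_mul := by rw [← transpose_mul, ← transpose_mul, ← Matrix.mul_assoc, hX.mul_inv_mul]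
  inv_mul_inv := by rw [← transpose_mul, ← transpose_mul, ← Matrix.mul_assoc, hX.inv_mul_inv]
  transpose_mul_inv := by rw [← transpose_mul, transpose_transpose, hX.transpose_inv_mul]
  transpose_inv_mul := by rw [← transpose_mul, transpose_transpose, hX.transpose_mul_inv]

theorem mul_eq_mul (hX : IsMoorePenroseInverse A X) (hY : IsMoorePenroseInverse A Y) :
    A * X = A * Y :=
  calc A * X = Xᵀ * (A * Y * A)ᵀ := by
        rw [hY.mul_inv_mul, ← transpose_mul, hX.transpose_mul_inv]
    _ = (A * X)ᵀ * (A * Y)ᵀ := by simp only [transpose_mul, Matrix.mul_assoc]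
    _ = A * Y := by
        rw [hX.transpose_mul_inv, hY.transpose_mul_inv, ← Matrix.mul_assoc, hX.mul_inv_mul]

theorem unique (hX : IsMoorePenroseInverse A X) (hY : IsMoorePenroseInverse A Y) : X = Y := by
  have hAX : A * X = A * Y := hX.mul_eq_mul hY
  have hXA : X * A = Y * A := by
    simpa using congrArg Matrix.transpose (hX.transpose.mul_eq_mul hY.transpose)
  calc X = X * A * X := hX.inv_mul_inv.symm
    _ = Y * A * Y := by rw [hXA, Matrix.mul_assoc, hAX, ← Matrix.mul_assoc]
    _ = Y := hY.inv_mul_inv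

theorem rank_inv_mul (hX : IsMoorePenroseInverse A X) : (X * A).rank = A.rank :=
  le_antisymm (rank_mul_le_right X A) <| by
    simpa only [← Matrix.mul_assoc, hX.mul_inv_mul] using rank_mul_le_right A (X * A)

theorem isIdempotentElem_inv_mul (hX : IsMoorePenroseInverse A X) :
    IsIdempotentElem (X * A) := by
  rw [IsIdempotentElem, ← Matrix.mul_assoc, hX.inv_mul_inv]

section Symmetric

variable {M X : Matrix m m ℝ}

theorem transpose_eq (hM : M.IsSymm) (hX : IsMoorePenroseInverse M X) : Xᵀ = X :=
  (hM.eq ▸ hX.transpose).unique hX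

theorem commute (hM : M.IsSymm) (hX : IsMoorePenroseInverse M X) : M * X = X * M := by
  rw [← hX.transpose_mul_inv, transpose_mul, hX.transpose_eq hM, hM.eq]

theorem posSemidef (hM : M.PosSemidef) (hX : IsMoorePenroseInverse M X) : X.PosSemidef := by
  have h := hM.conjTranspose_mul_mul_same X
  rwa [conjTranspose_eq_transpose_of_trivial, hX.transpose_eq hM.isSymm, hX.inv_mul_inv] at h

end Symmetric

end IsMoorePenroseInverse

theorem trace_inv_smul_add_smul_one_le [DecidableEq m] {M X : Matrix m m ℝ}
    (hM : M.PosSemidef) (hX : IsMoorePenroseInverse M X) {ξ μ : ℝ} (hξ : 0 < ξ) (hμ : 0 < μ) :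
    (ξ • M + μ • 1)⁻¹.trace ≤ ξ⁻¹ * X.trace + μ⁻¹ * (1 - X * M).trace := by
  set A := ξ • M + μ • 1
  set Q := X * M
  have hA : A.PosDef := hM.smul_add_smul_one_posDef hξ.le hμ
  have hdet : IsUnit A.det := (isUnit_iff_isUnit_det A).mp hA.isUnit
  have hAX : A * X = ξ • Q + μ • X := by
    rw [Matrix.add_mul, smul_mul, smul_mul, hX.commute hM.isSymm, Matrix.one_mul]
  have hAQ : A * (1 - Q) = μ • (1 - Q) := by
    rw [Matrix.add_mul, smul_mul, smul_mul, Matrix.mul_sub, ← Matrix.mul_assoc, hX.mul_inv_mul,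
      Matrix.mul_one, sub_self, smul_zero, Matrix.one_mul, zero_add]
  have htX : X.trace = ξ * (A⁻¹ * Q).trace + μ * (A⁻¹ * X).trace := by
    conv_lhs => rw [← nonsing_inv_mul_cancel_left A X hdet, hAX]
    simp only [Matrix.mul_add, Matrix.mul_smul, trace_add, trace_smul, smul_eq_mul]
  have htQ : (1 - Q).trace = μ * (A⁻¹ * (1 - Q)).trace := by
    conv_lhs => rw [← nonsing_inv_mul_cancel_left A (1 - Q) hdet, hAQ]
    rw [Matrix.mul_smul, trace_smul, smul_eq_mul]
  have htA : A⁻¹.trace = (A⁻¹ * Q).trace + (A⁻¹ * (1 - Q)).trace := by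
    rw [← trace_add, ← Matrix.mul_add, add_sub_cancel, Matrix.mul_one]
  have hsplit : ξ⁻¹ * X.trace + μ⁻¹ * (1 - Q).trace
      = A⁻¹.trace + ξ⁻¹ * μ * (A⁻¹ * X).trace := by
    rw [htX, htQ, htA]
    field_simp
    ring
  have hAX_nonneg : 0 ≤ (A⁻¹ * X).trace :=
    hA.inv.posSemidef.trace_mul_nonneg (hX.posSemidef hM)
  have : 0 ≤ ξ⁻¹ * μ * (A⁻¹ * X).trace := by positivity
  linarith

end Matrix

open Matrix

theorem trace_inverse_rpow_bound (n : ℕ)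
    (K : Matrix (Fin n) (Fin (n + 1)) ℝ) (hK : K.rank = n)
    (Mplus : Matrix (Fin (n + 1)) (Fin (n + 1)) ℝ)
    -- Mplus is the Moore–Penrose pseudoinverse of KᵀK
    (h1 : (Kᵀ * K) * Mplus * (Kᵀ * K) = Kᵀ * K)
    (h2 : Mplus * (Kᵀ * K) * Mplus = Mplus)
    (h3 : ((Kᵀ * K) * Mplus)ᵀ = (Kᵀ * K) * Mplus)
    (h4 : (Mplus * (Kᵀ * K))ᵀ = Mplus * (Kᵀ * K))
    (ξ lam s : ℝ) (hξ : 0 < ξ) (hlam : 0 < lam) (hs : s ∈ Set.Ioc (0:ℝ) 1) :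
    (Matrix.trace ((ξ • (Kᵀ * K) + lam • (1 : Matrix (Fin (n + 1)) (Fin (n + 1)) ℝ))⁻¹)) ^ s
      ≤ ξ ^ (-s) * (Matrix.trace Mplus) ^ s + lam ^ (-s) := by
  have hM : (Kᵀ * K).PosSemidef := by
    simpa only [conjTranspose_eq_transpose_of_trivial] using posSemidef_conjTranspose_mul_self K
  have hX : IsMoorePenroseInverse (Kᵀ * K) Mplus := ⟨h1, h2, h3, h4⟩
  have htrX : 0 ≤ Mplus.trace := (hX.posSemidef hM).trace_nonneg
  have hcorank : (1 - Mplus * (Kᵀ * K)).trace = 1 := by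
    rw [trace_sub, trace_one, trace_eq_rank_of_isIdempotentElem hX.isIdempotentElem_inv_mul,
      hX.rank_inv_mul, rank_transpose_mul_self, hK]
    simp
  have hbound := trace_inv_smul_add_smul_one_le hM hX hξ hlam
  rw [hcorank, mul_one] at hbound
  calc _ ≤ (ξ⁻¹ * Mplus.trace + lam⁻¹) ^ s :=
        Real.rpow_le_rpow (hM.smul_add_smul_one_posDef hξ.le hlam).inv.posSemidef.trace_nonneg
          hbound hs.1.le
    _ ≤ (ξ⁻¹ * Mplus.trace) ^ s + lam⁻¹ ^ s :=
        Real.rpow_add_le_add_rpow (by positivity) (by positivity) hs.1.le hs.2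
    _ = _ := by
        rw [Real.mul_rpow (by positivity) htrX, Real.inv_rpow hξ.le, Real.inv_rpow hlam.le,
          Real.rpow_neg hξ.le, Real.rpow_neg hlam.le]
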